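/- Let A, B be positive definite matrices with K·A ≥ B ≥ k·A for constants 0 < k < K, and let ν ∈ [0,1]. Then Δ_ν(k,K)·A ≥ A∇_ν B − A#_ν B ≥ δ_ν(k,K)·A in the Loewner order, where Δ_ν(k,K) = max of f_ν on [k,K] and δ_ν(k,K) = min of f_ν on [k,K] with f_ν(t) = 1 − ν + νt − t^ν. -/

import Mathlib

/-!
Put `C = A^{-1/2} B A^{-1/2}`. Congruence by `A^{-1/2}` turns `k A ≤ B ≤ K A` into
`k ≤ C ≤ K`, so the spectrum of `C` lies in `[k, K]`, and it turns `A ∇_ν B - A #_ν B` into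
`f_ν(C)`. The scalar function `f_ν` vanishes at `1`, decreases on `(0, 1]` and increases on
`[1, ∞)`, so `δ_ν(k, K) ≤ f_ν ≤ Δ_ν(k, K)` on `[k, K]`; by the functional calculus
`δ_ν(k, K) ≤ f_ν(C) ≤ Δ_ν(k, K)`, and congruence back by `A^{1/2}` gives the theorem.
-/

open Matrix ComplexOrder

/-- Real power of a Hermitian matrix via the spectral theorem (functional calculus);
junk value `0` for non-Hermitian matrices. -/
noncomputable def Matrix.hrpow {n : ℕ} (A : Matrix (Fin n) (Fin n) ℂ) (r : ℝ) :
    Matrix (Fin n) (Fin n) ℂ :=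
  if h : A.IsHermitian then
    (h.eigenvectorUnitary : Matrix (Fin n) (Fin n) ℂ) *
      Matrix.diagonal (fun i => ((h.eigenvalues i ^ r : ℝ) : ℂ)) *
      (h.eigenvectorUnitary : Matrix (Fin n) (Fin n) ℂ)ᴴ
  else 0

/-- Weighted geometric mean `A #_ν B` of positive definite matrices:
`A^{1/2} (A^{-1/2} B A^{-1/2})^ν A^{1/2}`. -/
noncomputable def Matrix.gmean {n : ℕ} (A B : Matrix (Fin n) (Fin n) ℂ) (ν : ℝ) :
    Matrix (Fin n) (Fin n) ℂ :=
  A.hrpow (1/2) * ((A.hrpow (-(1/2)) * B * A.hrpow (-(1/2))).hrpow ν) * A.hrpow (1/2)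

/-- Quadratic weighted geometric mean `X ⓢ_ν Y = X* (|Y X⁻¹|²)^ν X`. -/
noncomputable def Matrix.qgmean {n : ℕ} (X Y : Matrix (Fin n) (Fin n) ℂ) (ν : ℝ) :
    Matrix (Fin n) (Fin n) ℂ :=
  Xᴴ * ((Y * X⁻¹)ᴴ * (Y * X⁻¹)).hrpow ν * X

open Set
open scoped MatrixOrder

/-- The paper's `f_ν`. -/
noncomputable def youngGap (ν t : ℝ) : ℝ := 1 - ν + ν * t - t ^ ν

section YoungGap

variable {ν : ℝ}

lemma youngGap_one (ν : ℝ) : youngGap ν 1 = 0 := by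
  simp [youngGap]

lemma hasDerivAt_youngGap (ν : ℝ) {t : ℝ} (ht : 0 < t) :
    HasDerivAt (youngGap ν) (ν - ν * t ^ (ν - 1)) t := by
  have := (((hasDerivAt_id t).const_mul ν).const_add (1 - ν)).sub
    (Real.hasDerivAt_rpow_const (p := ν) (Or.inl ht.ne'))
  rw [mul_one] at this
  exact this

lemma antitoneOn_youngGap (hν : ν ∈ Icc 0 1) : AntitoneOn (youngGap ν) (Ioc 0 1) := by
  refine antitoneOn_of_hasDerivWithinAt_nonpos (f' := fun t => ν - ν * t ^ (ν - 1))
    (convex_Ioc 0 1)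
    (fun t ht => (hasDerivAt_youngGap ν ht.1).continuousAt.continuousWithinAt)
    (fun t ht => ?_) (fun t ht => ?_) <;> rw [interior_Ioc] at ht
  · exact (hasDerivAt_youngGap ν ht.1).hasDerivWithinAt
  · have : 1 ≤ t ^ (ν - 1) :=
      Real.one_le_rpow_of_pos_of_le_one_of_nonpos ht.1 ht.2.le (by linarith [hν.2])
    nlinarith [hν.1]

lemma monotoneOn_youngGap (hν : ν ∈ Icc 0 1) : MonotoneOn (youngGap ν) (Ici 1) := by
  refine monotoneOn_of_hasDerivWithinAt_nonneg (f' := fun t => ν - ν * t ^ (ν - 1))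
    (convex_Ici 1)
    (fun t ht => (hasDerivAt_youngGap ν (one_pos.trans_le ht)).continuousAt.continuousWithinAt)
    (fun t ht => ?_) (fun t ht => ?_) <;> rw [interior_Ici] at ht
  · exact (hasDerivAt_youngGap ν (one_pos.trans ht)).hasDerivWithinAt
  · have : t ^ (ν - 1) ≤ 1 := Real.rpow_le_one_of_one_le_of_nonpos ht.le (by linarith [hν.2])
    nlinarith [hν.1]

lemma youngGap_nonneg (hν : ν ∈ Icc 0 1) {t : ℝ} (ht : 0 < t) : 0 ≤ youngGap ν t := by
  rw [← youngGap_one ν]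
  rcases le_total t 1 with h | h
  · exact antitoneOn_youngGap hν ⟨ht, h⟩ ⟨one_pos, le_rfl⟩ h
  · exact monotoneOn_youngGap hν (mem_Ici.2 le_rfl) h h

/-- `Δ_ν(k, K)`, the maximum of `youngGap ν` on `[k, K]`. -/
noncomputable def youngGapMax (ν k K : ℝ) : ℝ :=
  if K < 1 then youngGap ν k
  else if k ≤ 1 ∧ 1 ≤ K then max (youngGap ν k) (youngGap ν K)
  else youngGap ν K

/-- `δ_ν(k, K)`, the minimum of `youngGap ν` on `[k, K]`. -/
noncomputable def youngGapMin (ν k K : ℝ) : ℝ :=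
  if K < 1 then youngGap ν K
  else if k ≤ 1 ∧ 1 ≤ K then 0
  else youngGap ν k

lemma youngGap_le_youngGapMax (hν : ν ∈ Icc 0 1) {k K t : ℝ} (hk : 0 < k)
    (ht : t ∈ Icc k K) :
    youngGap ν t ≤ youngGapMax ν k K := by
  have ht0 : 0 < t := hk.trans_le ht.1
  unfold youngGapMax
  split_ifs with hK hkK
  · exact antitoneOn_youngGap hν ⟨hk, by linarith [ht.1, ht.2]⟩ ⟨ht0, by linarith [ht.2]⟩
      ht.1
  · rcases le_total t 1 with h | h
    · exact le_max_of_le_left (antitoneOn_youngGap hν ⟨hk, hkK.1⟩ ⟨ht0, h⟩ ht.1)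
    · exact le_max_of_le_right (monotoneOn_youngGap hν h (h.trans ht.2) ht.2)
  · have hk1 : 1 ≤ k := by by_contra h; exact hkK ⟨by linarith, by linarith⟩
    exact monotoneOn_youngGap hν (hk1.trans ht.1) (hk1.trans (ht.1.trans ht.2)) ht.2

lemma youngGapMin_le_youngGap (hν : ν ∈ Icc 0 1) {k K t : ℝ} (hk : 0 < k)
    (ht : t ∈ Icc k K) :
    youngGapMin ν k K ≤ youngGap ν t := by
  have ht0 : 0 < t := hk.trans_le ht.1
  unfold youngGapMin
  split_ifs with hK hkK
  · exact antitoneOn_youngGap hν ⟨ht0, by linarith [ht.2]⟩ ⟨ht0.trans_le ht.2, hK.le⟩ ht.2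
  · exact youngGap_nonneg hν ht0
  · have hk1 : 1 ≤ k := by by_contra h; exact hkK ⟨by linarith, by linarith⟩
    exact monotoneOn_youngGap hν hk1 (hk1.trans ht.1) ht.1

end YoungGap

namespace Matrix

variable {n : ℕ} {A B : Matrix (Fin n) (Fin n) ℂ}

lemma continuousOn_spectrum (A : Matrix (Fin n) (Fin n) ℂ) (f : ℝ → ℝ) :
    ContinuousOn f (spectrum ℝ A) :=
  A.finite_real_spectrum.continuousOn f

lemma IsHermitian.hrpow_eq_cfc (hA : A.IsHermitian) (r : ℝ) :
    A.hrpow r = cfc (fun x : ℝ => x ^ r) A := by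
  rw [hA.cfc_eq, hrpow, dif_pos hA]; rfl

lemma IsHermitian.hrpow (hA : A.IsHermitian) (r : ℝ) : (A.hrpow r).IsHermitian := by
  rw [hA.hrpow_eq_cfc]; exact cfc_predicate _ _

lemma PosDef.hrpow_mul_hrpow (hA : A.PosDef) (r s : ℝ) :
    A.hrpow r * A.hrpow s = A.hrpow (r + s) := by
  rw [hA.isHermitian.hrpow_eq_cfc, hA.isHermitian.hrpow_eq_cfc, hA.isHermitian.hrpow_eq_cfc,
    ← cfc_mul _ _ _ (A.continuousOn_spectrum _) (A.continuousOn_spectrum _)]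
  refine cfc_congr fun x hx => ?_
  obtain ⟨i, rfl⟩ := hA.isHermitian.spectrum_real_eq_range_eigenvalues ▸ hx
  exact (Real.rpow_add (hA.eigenvalues_pos i) r s).symm

lemma PosDef.hrpow_zero (hA : A.PosDef) : A.hrpow 0 = 1 := by
  rw [hA.isHermitian.hrpow_eq_cfc]; simpa using cfc_const_one ℝ A

lemma PosDef.hrpow_one (hA : A.PosDef) : A.hrpow 1 = A := by
  rw [hA.isHermitian.hrpow_eq_cfc]
  simpa using cfc_id' (R := ℝ) (a := A) hA.isHermitian.isSelfAdjoint

lemma PosDef.hrpow_neg_half_mul_mul (hA : A.PosDef) :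
    A.hrpow (-(1/2)) * A * A.hrpow (-(1/2)) = 1 := by
  nth_rw 2 [← hA.hrpow_one]
  rw [hA.hrpow_mul_hrpow, hA.hrpow_mul_hrpow]
  norm_num [hA.hrpow_zero]

lemma PosDef.hrpow_half_mul_self (hA : A.PosDef) : A.hrpow (1/2) * A.hrpow (1/2) = A := by
  rw [hA.hrpow_mul_hrpow]; norm_num [hA.hrpow_one]

lemma PosDef.hrpow_half_mul_algebraMap_mul (hA : A.PosDef) (d : ℝ) :
    A.hrpow (1/2) * algebraMap ℝ _ d * A.hrpow (1/2) = d • A := by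
  rw [Algebra.algebraMap_eq_smul_one, mul_smul_comm, mul_one, smul_mul_assoc,
    hA.hrpow_half_mul_self]

lemma IsHermitian.cfc_youngGap (hA : A.IsHermitian) (ν : ℝ) :
    cfc (youngGap ν) A = (1 - ν) • 1 + ν • A - A.hrpow ν := by
  have hsub := cfc_sub (fun t : ℝ => 1 - ν + ν * t) (fun t => t ^ ν) A
    (A.continuousOn_spectrum _) (A.continuousOn_spectrum _)
  rw [show youngGap ν = fun t => 1 - ν + ν * t - t ^ ν from rfl, hsub,
    cfc_const_add _ _ _ (A.continuousOn_spectrum _) hA.isSelfAdjoint,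
    cfc_const_mul_id _ _ hA.isSelfAdjoint, hA.hrpow_eq_cfc, Algebra.algebraMap_eq_smul_one]

lemma IsHermitian.hrpow_conj (hA : A.IsHermitian) (hB : B.IsHermitian) (r : ℝ) :
    (A.hrpow r * B * A.hrpow r).IsHermitian := by
  have h := isHermitian_conjTranspose_mul_mul (A.hrpow r) hB
  rwa [(hA.hrpow r).eq] at h

lemma PosDef.arith_sub_gmean_eq (hA : A.PosDef) (hB : B.IsHermitian) (ν : ℝ) :
    (1 - ν) • A + ν • B - A.gmean B ν = A.hrpow (1/2) *
      cfc (youngGap ν) (A.hrpow (-(1/2)) * B * A.hrpow (-(1/2))) * A.hrpow (1/2) := by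
  rw [(hA.isHermitian.hrpow_conj hB _).cfc_youngGap, gmean]
  set S := A.hrpow (1/2)
  set T := A.hrpow (-(1/2))
  have hSS : S * S = A := hA.hrpow_half_mul_self
  have hSTBTS : S * (T * B * T) * S = B := by
    have hST : S * T = 1 := by rw [hA.hrpow_mul_hrpow]; norm_num [hA.hrpow_zero]
    have hTS : T * S = 1 := by rw [hA.hrpow_mul_hrpow]; norm_num [hA.hrpow_zero]
    simp only [← mul_assoc, hST, one_mul]
    rw [mul_assoc, hTS, mul_one]
  simp only [mul_sub, sub_mul, mul_add, add_mul, mul_smul_comm, smul_mul_assoc, mul_one, hSS,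
    hSTBTS]

lemma PosDef.spectrum_conj_subset_Icc (hA : A.PosDef) (hB : B.IsHermitian) {k K : ℝ}
    (hkB : k • A ≤ B) (hBK : B ≤ K • A) :
    spectrum ℝ (A.hrpow (-(1/2)) * B * A.hrpow (-(1/2))) ⊆ Icc k K := by
  have hT : IsSelfAdjoint (A.hrpow (-(1/2))) := hA.isHermitian.hrpow _
  have hC : IsSelfAdjoint (A.hrpow (-(1/2)) * B * A.hrpow (-(1/2))) :=
    hA.isHermitian.hrpow_conj hB _
  have hTAT (c : ℝ) :
      A.hrpow (-(1/2)) * (c • A) * A.hrpow (-(1/2)) = algebraMap ℝ _ c := by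
    rw [Algebra.algebraMap_eq_smul_one, mul_smul_comm, smul_mul_assoc,
      hA.hrpow_neg_half_mul_mul]
  intro x hx
  exact ⟨(algebraMap_le_iff_le_spectrum hC).1 (hTAT k ▸ hT.conjugate_le_conjugate hkB) x hx,
    (le_algebraMap_iff_spectrum_le hC).1 (hTAT K ▸ hT.conjugate_le_conjugate hBK) x hx⟩

lemma PosDef.smul_le_arith_sub_gmean (hA : A.PosDef) (hB : B.IsHermitian) {k K ν d : ℝ}
    (hkB : k • A ≤ B) (hBK : B ≤ K • A) (hd : ∀ t ∈ Icc k K, d ≤ youngGap ν t) :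
    d • A ≤ (1 - ν) • A + ν • B - A.gmean B ν := by
  rw [hA.arith_sub_gmean_eq hB, ← hA.hrpow_half_mul_algebraMap_mul d]
  exact (hA.isHermitian.hrpow _).isSelfAdjoint.conjugate_le_conjugate <| algebraMap_le_cfc _ _ _
    (fun t ht => hd t (hA.spectrum_conj_subset_Icc hB hkB hBK ht)) (continuousOn_spectrum _ _)
    (hA.isHermitian.hrpow_conj hB _)

lemma PosDef.arith_sub_gmean_le_smul (hA : A.PosDef) (hB : B.IsHermitian) {k K ν d : ℝ}
    (hkB : k • A ≤ B) (hBK : B ≤ K • A) (hd : ∀ t ∈ Icc k K, youngGap ν t ≤ d) :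
    (1 - ν) • A + ν • B - A.gmean B ν ≤ d • A := by
  rw [hA.arith_sub_gmean_eq hB, ← hA.hrpow_half_mul_algebraMap_mul d]
  exact (hA.isHermitian.hrpow _).isSelfAdjoint.conjugate_le_conjugate <| cfc_le_algebraMap _ _ _
    (fun t ht => hd t (hA.spectrum_conj_subset_Icc hB hkB hBK ht)) (continuousOn_spectrum _ _)
    (hA.isHermitian.hrpow_conj hB _)

end Matrix

theorem stmt_19_general {n : ℕ} (A B : Matrix (Fin n) (Fin n) ℂ)
    (hA : A.PosDef) (hB : B.PosDef) {k K : ℝ} (hk : 0 < k)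
    (hKA : (((K : ℝ) : ℂ) • A - B).PosSemidef)
    (hkA : (B - ((k : ℝ) : ℂ) • A).PosSemidef)
    {ν : ℝ} (hν : ν ∈ Set.Icc (0:ℝ) 1) :
    ((if K < 1 then 1 - ν + ν * k - k ^ ν
      else if k ≤ 1 ∧ 1 ≤ K then
        max (1 - ν + ν * k - k ^ ν) (1 - ν + ν * K - K ^ ν)
      else 1 - ν + ν * K - K ^ ν : ℝ) • A -
      ((((1 - ν : ℝ) : ℂ) • A + ((ν : ℝ) : ℂ) • B) - A.gmean B ν)).PosSemidef ∧
    (((((1 - ν : ℝ) : ℂ) • A + ((ν : ℝ) : ℂ) • B) - A.gmean B ν) -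
      (if K < 1 then 1 - ν + ν * K - K ^ ν
       else if k ≤ 1 ∧ 1 ≤ K then 0
       else 1 - ν + ν * k - k ^ ν : ℝ) • A).PosSemidef := by
  simp only [Complex.coe_smul] at hKA hkA ⊢
  exact ⟨hA.arith_sub_gmean_le_smul hB.isHermitian hkA hKA
      fun t ht => youngGap_le_youngGapMax hν hk ht,
    hA.smul_le_arith_sub_gmean hB.isHermitian hkA hKA
      fun t ht => youngGapMin_le_youngGap hν hk ht⟩

theorem stmt_19 {n : ℕ} (A B : Matrix (Fin n) (Fin n) ℂ)
    (hA : A.PosDef) (hB : B.PosDef) {k K : ℝ} (hk : 0 < k) (hkK : k < K)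
    (hKA : (((K : ℝ) : ℂ) • A - B).PosSemidef)
    (hkA : (B - ((k : ℝ) : ℂ) • A).PosSemidef)
    {ν : ℝ} (hν : ν ∈ Set.Icc (0:ℝ) 1) :
    ((if K < 1 then 1 - ν + ν * k - k ^ ν
      else if k ≤ 1 ∧ 1 ≤ K then
        max (1 - ν + ν * k - k ^ ν) (1 - ν + ν * K - K ^ ν)
      else 1 - ν + ν * K - K ^ ν : ℝ) • A -
      ((((1 - ν : ℝ) : ℂ) • A + ((ν : ℝ) : ℂ) • B) - A.gmean B ν)).PosSemidef ∧
    (((((1 - ν : ℝ) : ℂ) • A + ((ν : ℝ) : ℂ) • B) - A.gmean B ν) -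
      (if K < 1 then 1 - ν + ν * K - K ^ ν
       else if k ≤ 1 ∧ 1 ≤ K then 0
       else 1 - ν + ν * k - k ^ ν : ℝ) • A).PosSemidef :=
  stmt_19_general A B hA hB hk hKA hkA hν
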